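/- Let p be a prime, T the d-regular rooted tree, D ≥ 1, and P ≤ Aut(T^D) a minimal pattern subgroup which is a p-group, such that the group of finite type G_P is topologically finitely generated. Let 𝒜 be a finite invertible automaton over the alphabet {1,…,d} and G(𝒜) ≤ Aut(T) the group generated by the automorphisms defined by its states. If π_D(G(𝒜)) = P, then the closure of G(𝒜) in Aut(T) equals G_P. -/

import Mathlib

namespace TreeFT

/-- Port helper: `Equiv.Perm.apply_inv_self` was removed from Mathlib. -/
theorem Equiv.Perm.apply_inv_self {α : Type*} (f : Equiv.Perm α) (x : α) : f (f⁻¹ x) = x :=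
  _root_.Equiv.apply_symm_apply f x

/-- Port helper: `Equiv.Perm.inv_apply_self` was removed from Mathlib. -/
theorem Equiv.Perm.inv_apply_self {α : Type*} (f : Equiv.Perm α) (x : α) : f⁻¹ (f x) = x :=
  _root_.Equiv.symm_apply_apply f x

/-- Vertices of the `d`-regular rooted tree: finite words over `Fin d`. -/
abbrev Vertex (d : ℕ) := List (Fin d)

/-- The automorphism group of the `d`-regular rooted tree, realized as the subgroup of
permutations of the vertex set that preserve length (levels) and prefixes (adjacency). -/
def treeAut (d : ℕ) : Subgroup (Equiv.Perm (Vertex d)) where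
  carrier := {g | (∀ v : Vertex d, (g v).length = v.length) ∧
      (∀ v w : Vertex d, (g (v ++ w)).take v.length = g v)}
  one_mem' := ⟨fun _ => rfl, fun v w => List.take_left⟩
  mul_mem' := by
    rintro g h ⟨hg1, hg2⟩ ⟨hh1, hh2⟩
    refine ⟨fun v => by rw [Equiv.Perm.mul_apply, hg1, hh1], fun v w => ?_⟩
    have h1 : h (v ++ w) = h v ++ (h (v ++ w)).drop v.length := by
      conv_lhs => rw [← List.take_append_drop v.length (h (v ++ w))]
      rw [hh2]
    rw [Equiv.Perm.mul_apply, Equiv.Perm.mul_apply, h1]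
    have h2 : v.length = (h v).length := (hh1 v).symm
    rw [h2]
    exact hg2 _ _
  inv_mem' := by
    rintro g ⟨hg1, hg2⟩
    constructor
    · intro v
      have h := hg1 (g⁻¹ v)
      rw [Equiv.Perm.apply_inv_self] at h
      exact h.symm
    · intro v w
      apply g.injective
      have hlen : v.length ≤ (g⁻¹ (v ++ w)).length := by
        have h := hg1 (g⁻¹ (v ++ w))
        rw [Equiv.Perm.apply_inv_self] at h
        rw [← h, List.length_append]
        exact Nat.le_add_right _ _
      have h3 := hg2 ((g⁻¹ (v ++ w)).take v.length) ((g⁻¹ (v ++ w)).drop v.length)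
      rw [List.take_append_drop, Equiv.Perm.apply_inv_self, List.length_take,
        min_eq_left hlen, List.take_left] at h3
      rw [← h3, Equiv.Perm.apply_inv_self]

variable {d : ℕ}

/-- `Aut(T)` as a type. -/
abbrev TAut (d : ℕ) := ↥(treeAut d)

lemma length_apply (g : TAut d) (v : Vertex d) :
    ((g : Equiv.Perm (Vertex d)) v).length = v.length := g.2.1 v

lemma take_apply (g : TAut d) (v w : Vertex d) :
    ((g : Equiv.Perm (Vertex d)) (v ++ w)).take v.length = (g : Equiv.Perm (Vertex d)) v :=
  g.2.2 v w

lemma apply_append (g : TAut d) (v w : Vertex d) :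
    (g : Equiv.Perm (Vertex d)) (v ++ w) =
      (g : Equiv.Perm (Vertex d)) v ++ ((g : Equiv.Perm (Vertex d)) (v ++ w)).drop v.length := by
  conv_lhs => rw [← List.take_append_drop v.length ((g : Equiv.Perm (Vertex d)) (v ++ w))]
  rw [take_apply]

/-- The section `g|_v` of a tree automorphism at the vertex `v`. -/
def sect (g : TAut d) (v : Vertex d) : TAut d :=
  ⟨{ toFun := fun w => ((g : Equiv.Perm (Vertex d)) (v ++ w)).drop v.length
     invFun := fun w =>
       (((g : Equiv.Perm (Vertex d)))⁻¹ ((g : Equiv.Perm (Vertex d)) v ++ w)).drop v.length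
     left_inv := by
       intro w
       show ((g : Equiv.Perm (Vertex d))⁻¹
         ((g : Equiv.Perm (Vertex d)) v ++
           ((g : Equiv.Perm (Vertex d)) (v ++ w)).drop v.length)).drop v.length = w
       rw [← apply_append g v w, Equiv.Perm.inv_apply_self, List.drop_left]
     right_inv := by
       intro w
       show ((g : Equiv.Perm (Vertex d))
         (v ++ ((g : Equiv.Perm (Vertex d))⁻¹
           ((g : Equiv.Perm (Vertex d)) v ++ w)).drop v.length)).drop v.length = w
       have h2 := apply_append g⁻¹ ((g : Equiv.Perm (Vertex d)) v) w
       simp only [InvMemClass.coe_inv] at h2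
       rw [Equiv.Perm.inv_apply_self, length_apply] at h2
       rw [← h2, Equiv.Perm.apply_inv_self, ← length_apply g v, List.drop_left] },
   by
    constructor
    · intro w
      simp only [Equiv.coe_fn_mk, List.length_drop, length_apply, List.length_append]
      omega
    · intro w u
      simp only [Equiv.coe_fn_mk]
      rw [← List.append_assoc]
      have h0 : ((g : Equiv.Perm (Vertex d)) ((v ++ w) ++ u)).take (v ++ w).length
          = (g : Equiv.Perm (Vertex d)) (v ++ w) := take_apply g (v ++ w) u
      have h1 : w.length = (v.length + w.length) - v.length := by omega
      rw [h1, ← List.drop_take, ← List.length_append, h0]⟩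

lemma sect_apply (g : TAut d) (v w : Vertex d) :
    ((sect g v : TAut d) : Equiv.Perm (Vertex d)) w
      = ((g : Equiv.Perm (Vertex d)) (v ++ w)).drop v.length := rfl

lemma sect_mul (g h : TAut d) (v : Vertex d) :
    sect (g * h) v = sect g ((h : Equiv.Perm (Vertex d)) v) * sect h v := by
  apply Subtype.ext
  apply Equiv.ext
  intro w
  simp only [MulMemClass.coe_mul, Equiv.Perm.mul_apply, sect_apply]
  rw [← apply_append h v w, length_apply]

lemma sect_one (v : Vertex d) : sect (1 : TAut d) v = 1 := by
  apply Subtype.ext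
  apply Equiv.ext
  intro w
  simp only [sect_apply, OneMemClass.coe_one, Equiv.Perm.coe_one, id_eq]
  exact List.drop_left

end TreeFT
namespace TreeFT

variable {d : ℕ}

/-- The stabilizer `St(n)` of the `n`-th level: automorphisms acting trivially on the first
`n` levels of the tree. -/
def lst (d n : ℕ) : Subgroup (TAut d) where
  carrier := {g | ∀ v : Vertex d, v.length ≤ n → (g : Equiv.Perm (Vertex d)) v = v}
  one_mem' := fun _ _ => rfl
  mul_mem' := by
    intro g h hg hh v hv
    show (g : Equiv.Perm (Vertex d)) ((h : Equiv.Perm (Vertex d)) v) = v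
    rw [hh v hv, hg v hv]
  inv_mem' := by
    intro g hg v hv
    show ((g : Equiv.Perm (Vertex d)))⁻¹ v = v
    apply (g : Equiv.Perm (Vertex d)).injective
    rw [Equiv.Perm.apply_inv_self, hg v hv]

lemma mem_lst {g : TAut d} {n : ℕ} :
    g ∈ lst d n ↔ ∀ v : Vertex d, v.length ≤ n → (g : Equiv.Perm (Vertex d)) v = v :=
  Iff.rfl

instance lst_normal (d n : ℕ) : (lst d n).Normal := by
  constructor
  intro s hs g v hv
  show (g : Equiv.Perm (Vertex d))
    ((s : Equiv.Perm (Vertex d)) (((g : Equiv.Perm (Vertex d)))⁻¹ v)) = v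
  have h1 : ((g⁻¹ : TAut d) : Equiv.Perm (Vertex d)) v = ((g : Equiv.Perm (Vertex d)))⁻¹ v := by
    simp
  have h2 : (((g : Equiv.Perm (Vertex d)))⁻¹ v).length ≤ n := by
    rw [← h1, length_apply]; exact hv
  rw [hs _ h2, Equiv.Perm.apply_inv_self]

/-- `Aut(T^n)`, the automorphism group of the finite tree consisting of the first `n` levels,
realized as the quotient of `Aut(T)` by the `n`-th level stabilizer. -/
abbrev FAut (d n : ℕ) := TAut d ⧸ lst d n

/-- `π_n : Aut(T) → Aut(T^n)`, restriction to the first `n` levels. -/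
def proj (d n : ℕ) : TAut d →* FAut d n := QuotientGroup.mk' (lst d n)

lemma proj_surjective (d n : ℕ) : Function.Surjective (proj d n) :=
  QuotientGroup.mk'_surjective _

/-- The group of finite type `G_P` of depth `D` with pattern group `P ≤ Aut(T^D)`:
all tree automorphisms whose section at every vertex acts on the first `D` levels as an
element of `P`. -/
def gft (d D : ℕ) (P : Subgroup (FAut d D)) : Subgroup (TAut d) where
  carrier := {g | ∀ v : Vertex d, proj d D (sect g v) ∈ P}
  one_mem' := by
    intro v
    rw [sect_one, map_one]
    exact one_mem P
  mul_mem' := by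
    intro g h hg hh v
    rw [sect_mul, map_mul]
    exact mul_mem (hg _) (hh _)
  inv_mem' := by
    intro g hg v
    have h2 : sect g (((g⁻¹ : TAut d) : Equiv.Perm (Vertex d)) v) * sect g⁻¹ v = 1 := by
      rw [← sect_mul, mul_inv_cancel, sect_one]
    have h3 : sect g⁻¹ v = (sect g (((g⁻¹ : TAut d) : Equiv.Perm (Vertex d)) v))⁻¹ :=
      (inv_eq_of_mul_eq_one_right h2).symm
    rw [h3, map_inv]
    exact inv_mem (hg _)

lemma mem_gft {g : TAut d} {D : ℕ} {P : Subgroup (FAut d D)} :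
    g ∈ gft d D P ↔ ∀ v : Vertex d, proj d D (sect g v) ∈ P := Iff.rfl

/-- `P ≤ Aut(T^D)` is a minimal pattern subgroup if `π_D(G_P) = P`. -/
def IsMinimalPattern (d D : ℕ) (P : Subgroup (FAut d D)) : Prop :=
  (gft d D P).map (proj d D) = P

/-- A subgroup of `Aut(T)` is level-transitive if it acts transitively on every level. -/
def LevelTransitive (H : Subgroup (TAut d)) : Prop :=
  ∀ v w : Vertex d, v.length = w.length → ∃ g ∈ H, (g : Equiv.Perm (Vertex d)) v = w

/-- A subgroup of `Aut(T)` is self-similar if it contains all sections of its elements. -/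
def SelfSimilar (H : Subgroup (TAut d)) : Prop :=
  ∀ g ∈ H, ∀ v : Vertex d, sect g v ∈ H

/-- A subgroup of `Aut(T)` is fractal if it is self-similar, level-transitive, and for every
vertex `v` the section map maps the stabilizer of `v` onto the whole group. -/
def Fractal (H : Subgroup (TAut d)) : Prop :=
  SelfSimilar H ∧ LevelTransitive H ∧
    ∀ v : Vertex d, ∀ h ∈ H, ∃ k ∈ H, (k : Equiv.Perm (Vertex d)) v = v ∧ sect k v = h

/-- The geometric product `K_n` of `K` at level `n`: elements of `St(n)` all of whose sections
at level-`n` vertices lie in `K`. -/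
def geom (K : Subgroup (TAut d)) (n : ℕ) : Subgroup (TAut d) where
  carrier := {g | g ∈ lst d n ∧ ∀ v : Vertex d, v.length = n → sect g v ∈ K}
  one_mem' := ⟨one_mem _, fun v _ => by rw [sect_one]; exact one_mem K⟩
  mul_mem' := by
    rintro g h ⟨hg1, hg2⟩ ⟨hh1, hh2⟩
    refine ⟨mul_mem hg1 hh1, fun v hv => ?_⟩
    rw [sect_mul, hh1 v hv.le]
    exact mul_mem (hg2 v hv) (hh2 v hv)
  inv_mem' := by
    rintro g ⟨hg1, hg2⟩
    refine ⟨inv_mem hg1, fun v hv => ?_⟩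
    have hfix : ((g⁻¹ : TAut d) : Equiv.Perm (Vertex d)) v = v :=
      (inv_mem hg1 : g⁻¹ ∈ lst d n) v hv.le
    have h2 : sect g v * sect g⁻¹ v = 1 := by
      have := sect_mul g g⁻¹ v
      rw [mul_inv_cancel, sect_one, hfix] at this
      exact this.symm
    rw [(inv_eq_of_mul_eq_one_right h2).symm]
    exact inv_mem (hg2 v hv)

end TreeFT
namespace TreeFT

variable {d : ℕ}

/-- The congruence topology on `Aut(T)`: the topology of pointwise convergence on the vertex
set (each vertex set carrying the discrete topology); the level stabilizers `St(n)` form a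
base of neighborhoods of the identity for it. -/
instance tautTopologicalSpace (d : ℕ) : TopologicalSpace (TAut d) :=
  TopologicalSpace.induced
    (fun g : TAut d => ((g : Equiv.Perm (Vertex d)) : Vertex d → Vertex d))
    (@Pi.topologicalSpace (Vertex d) (fun _ => Vertex d) (fun _ => ⊥))

lemma isOpen_eval (d : ℕ) (v u : Vertex d) :
    IsOpen {g : TAut d | (g : Equiv.Perm (Vertex d)) v = u} := by
  letI : TopologicalSpace (Vertex d) := ⊥
  haveI : DiscreteTopology (Vertex d) := ⟨rfl⟩
  have h : IsOpen ((fun f : Vertex d → Vertex d => f v) ⁻¹' {u}) :=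
    (continuous_apply v : Continuous fun f : Vertex d → Vertex d => f v).isOpen_preimage ({u} : Set (Vertex d)) (isOpen_discrete _)
  exact isOpen_induced h

lemma isOpen_eval_mem (d : ℕ) (v : Vertex d) (s : Set (Vertex d)) :
    IsOpen {g : TAut d | (g : Equiv.Perm (Vertex d)) v ∈ s} := by
  have h : {g : TAut d | (g : Equiv.Perm (Vertex d)) v ∈ s}
      = ⋃ u ∈ s, {g : TAut d | (g : Equiv.Perm (Vertex d)) v = u} := by
    ext g; simp
  rw [h]
  exact isOpen_biUnion fun u _ => isOpen_eval d v u

lemma continuous_into_vertex {X : Type*} [TopologicalSpace X] (f : X → Vertex d)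
    (h : ∀ u : Vertex d, IsOpen (f ⁻¹' {u})) :
    @Continuous X (Vertex d) _ ⊥ f := by
  rw [continuous_def]
  intro s _
  have hs : f ⁻¹' s = ⋃ u ∈ s, f ⁻¹' {u} := by
    ext x; simp
  rw [hs]
  exact isOpen_biUnion fun u _ => h u

instance tautContinuousMul (d : ℕ) : ContinuousMul (TAut d) := by
  constructor
  · -- continuity of multiplication
    apply continuous_induced_rng.2
    apply @continuous_pi _ _ _ _ (fun _ => (⊥ : TopologicalSpace (Vertex d)))
    intro v
    apply continuous_into_vertex
      (f := fun p : TAut d × TAut d => ((p.1 * p.2 : TAut d) : Equiv.Perm (Vertex d)) v)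
    intro u
    have h : (fun p : TAut d × TAut d =>
          ((p.1 * p.2 : TAut d) : Equiv.Perm (Vertex d)) v) ⁻¹' {u}
        = ⋃ w : Vertex d, ({g : TAut d | (g : Equiv.Perm (Vertex d)) w = u} ×ˢ
            {h : TAut d | (h : Equiv.Perm (Vertex d)) v = w}) := by
      ext p
      simp only [Set.mem_preimage, Set.mem_singleton_iff, Set.mem_iUnion, Set.mem_prod,
        Set.mem_setOf_eq]
      constructor
      · intro hp
        exact ⟨(p.2 : Equiv.Perm (Vertex d)) v, hp, rfl⟩
      · rintro ⟨w, hw1, hw2⟩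
        show (p.1 : Equiv.Perm (Vertex d)) ((p.2 : Equiv.Perm (Vertex d)) v) = u
        rw [hw2]; exact hw1
    rw [h]
    exact isOpen_iUnion fun w => (isOpen_eval d w u).prod (isOpen_eval d v w)

instance tautContinuousInv (d : ℕ) : ContinuousInv (TAut d) := by
  constructor
  · -- continuity of inversion
    apply continuous_induced_rng.2
    apply @continuous_pi _ _ _ _ (fun _ => (⊥ : TopologicalSpace (Vertex d)))
    intro v
    apply continuous_into_vertex
      (f := fun g : TAut d => ((g⁻¹ : TAut d) : Equiv.Perm (Vertex d)) v)
    intro u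
    have h : (fun g : TAut d => ((g⁻¹ : TAut d) : Equiv.Perm (Vertex d)) v) ⁻¹' {u}
        = {g : TAut d | (g : Equiv.Perm (Vertex d)) u = v} := by
      ext g
      simp only [Set.mem_preimage, Set.mem_singleton_iff, Set.mem_setOf_eq,
        InvMemClass.coe_inv]
      constructor
      · intro hg; rw [← hg, Equiv.Perm.apply_inv_self]
      · intro hg; rw [← hg, Equiv.Perm.inv_apply_self]
    rw [h]
    exact isOpen_eval d u v

instance tautTopologicalGroup (d : ℕ) : IsTopologicalGroup (TAut d) := ⟨⟩

/-- A subgroup of `Aut(T)` (viewed as a topological group with the congruence topology) is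
topologically finitely generated if it contains a finitely generated dense subgroup. -/
def TopFG (H : Subgroup (TAut d)) : Prop :=
  ∃ S : Set ↥H, S.Finite ∧ Dense ((Subgroup.closure S : Subgroup ↥H) : Set ↥H)

/-- A profinite group is just-infinite if it is infinite and every nontrivial closed normal
subgroup has finite index. -/
def JustInfinite (H : Subgroup (TAut d)) : Prop :=
  Infinite ↥H ∧ ∀ N : Subgroup ↥H, N.Normal → IsClosed (N : Set ↥H) → N ≠ ⊥ → N.index ≠ 0

/-- A profinite group is strongly complete if every subgroup of finite index is open. -/
def StronglyComplete (H : Subgroup (TAut d)) : Prop :=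
  ∀ N : Subgroup ↥H, N.index ≠ 0 → IsOpen (N : Set ↥H)

end TreeFT

namespace TreeFT

/-- A finite invertible automaton over the alphabet `{1,…,d}`, presented through the tree
automorphisms defined by its states: a finite set `Q` of states, for each state `q` the
automorphism `gen q ∈ Aut(T)` it defines, and a transition function `trans` recording that
the level-one sections of the state automorphisms are again state automorphisms
(`g_q|_x = g_{q'}` where `τ(q,x) = (y,q')`). -/
structure FiniteAutomaton (d : ℕ) where
  /-- the (finitely many) states -/
  Q : Type
  [fin : Fintype Q]
  /-- the tree automorphism defined by each state -/
  gen : Q → TAut d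
  /-- the state transition function -/
  trans : Q → Fin d → Q
  /-- sections of state automorphisms at level-one vertices are state automorphisms -/
  compat : ∀ q x, sect (gen q) [x] = gen (trans q x)

/-- The group `G(𝒜)` generated by a finite invertible automaton. -/
def automatonGroup {d : ℕ} (A : FiniteAutomaton d) : Subgroup (TAut d) :=
  Subgroup.closure (Set.range A.gen)

/-!
Self-similarity and `π_D(G(𝒜)) = P` put `G(𝒜)` inside the closed group `G_P`, so it suffices to
show `π_n(G(𝒜)) = π_n(G_P)` for every `n`. Because `P` is a `p`-group and `D ≥ 1`, `π_n(G_P)` is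
a finite `p`-group, so if `π_n(G(𝒜))` were a proper subgroup there would be a nontrivial
homomorphism `χ` from `G_P` to a finite abelian group, trivial on `St(n)` and on `G(𝒜)`. Since
`G(𝒜)` already maps onto `π_D(G_P)`, `χ` is nontrivial on `St(D) ∩ G_P`. The map
`χ ↦ (γ ↦ ∏ₓ χ(γ|ₓ))` pushes this one level down (graft a witness below a single first-level
vertex), so its `k`-th iterate is nontrivial on `St(D + k) ∩ G_P`. But a topologically finitely
generated group has only finitely many continuous homomorphisms to a finite group, and these are
all trivial on one common level stabilizer: a contradiction.
-/

variable {d : ℕ}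

lemma sect_nil (g : TAut d) : sect g [] = g :=
  Subtype.ext <| Equiv.ext fun _ => rfl

lemma sect_sect (g : TAut d) (v w : Vertex d) : sect (sect g v) w = sect g (v ++ w) := by
  ext u
  simp only [sect_apply, List.append_assoc, List.length_append, List.drop_drop]

lemma sect_inv (g : TAut d) (v : Vertex d) :
    sect g⁻¹ v = (sect g (((g⁻¹ : TAut d) : Equiv.Perm (Vertex d)) v))⁻¹ := by
  refine eq_inv_of_mul_eq_one_right ?_
  rw [← sect_mul, mul_inv_cancel, sect_one]

lemma apply_append_eq (g : TAut d) (v w : Vertex d) :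
    (g : Equiv.Perm (Vertex d)) (v ++ w) =
      (g : Equiv.Perm (Vertex d)) v ++ (sect g v : Equiv.Perm (Vertex d)) w :=
  apply_append g v w

lemma sect_pow {g : TAut d} {v : Vertex d} (hv : (g : Equiv.Perm (Vertex d)) v = v) (m : ℕ) :
    sect (g ^ m) v = sect g v ^ m := by
  induction m with
  | zero => simp [sect_one]
  | succ m ih => rw [pow_succ, sect_mul, hv, ih, pow_succ]

lemma exists_apply_singleton (g : TAut d) (x : Fin d) :
    ∃ y, (g : Equiv.Perm (Vertex d)) [x] = [y] :=
  List.length_eq_one_iff.mp (length_apply g [x])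

noncomputable def letterMap (g : TAut d) (x : Fin d) : Fin d :=
  (exists_apply_singleton g x).choose

lemma apply_singleton (g : TAut d) (x : Fin d) :
    (g : Equiv.Perm (Vertex d)) [x] = [letterMap g x] :=
  (exists_apply_singleton g x).choose_spec

lemma letterMap_bijective (g : TAut d) : Function.Bijective (letterMap g) :=
  Finite.injective_iff_bijective.mp fun x y hxy => by
    have h : (g : Equiv.Perm (Vertex d)) [x] = (g : Equiv.Perm (Vertex d)) [y] := by
      rw [apply_singleton, apply_singleton, hxy]
    simpa using (g : Equiv.Perm (Vertex d)).injective h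

instance : Subsingleton (TAut 0) := by
  have : Subsingleton (Vertex 0) := ⟨fun
    | [], [] => rfl
    | x :: _, _ => x.elim0
    | _, x :: _ => x.elim0⟩
  infer_instance

def ofSections (gs : Fin d → TAut d) : TAut d :=
  ⟨{ toFun := fun
       | [] => []
       | x :: u => x :: (gs x : Equiv.Perm (Vertex d)) u
     invFun := fun
       | [] => []
       | x :: u => x :: (gs x : Equiv.Perm (Vertex d))⁻¹ u
     left_inv := by rintro (_ | ⟨x, u⟩) <;> simp
     right_inv := by rintro (_ | ⟨x, u⟩) <;> simp },
   fun v => by cases v <;> simp [length_apply],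
   fun v w => by cases v <;> simp [take_apply]⟩

lemma ofSections_apply_cons (gs : Fin d → TAut d) (x : Fin d) (u : Vertex d) :
    (ofSections gs : Equiv.Perm (Vertex d)) (x :: u) = x :: (gs x : Equiv.Perm (Vertex d)) u :=
  rfl

lemma sect_ofSections (gs : Fin d → TAut d) (x : Fin d) : sect (ofSections gs) [x] = gs x := by
  ext u
  simp [sect_apply, ofSections_apply_cons]

lemma ofSections_mem_lst {gs : Fin d → TAut d} {n : ℕ} (h : ∀ x, gs x ∈ lst d n) :
    ofSections gs ∈ lst d (n + 1) := by
  rintro (_ | ⟨x, u⟩) hu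
  · rfl
  · rw [ofSections_apply_cons, h x u (by simpa using hu)]

lemma ofSections_mem_gft {D : ℕ} {P : Subgroup (FAut d D)} {gs : Fin d → TAut d}
    (h : ∀ x, gs x ∈ gft d D P) (hroot : proj d D (ofSections gs) ∈ P) :
    ofSections gs ∈ gft d D P := by
  rintro (_ | ⟨x, u⟩)
  · rwa [sect_nil]
  · rw [← List.singleton_append, ← sect_sect, sect_ofSections]
    exact h x u

lemma selfSimilar_of_sect_singleton_mem {H : Subgroup (TAut d)}
    (h : ∀ g ∈ H, ∀ x : Fin d, sect g [x] ∈ H) : SelfSimilar H := by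
  intro g hg v
  induction v generalizing g with
  | nil => rwa [sect_nil]
  | cons x v ih =>
    rw [← List.singleton_append, ← sect_sect]
    exact ih _ (h g hg x)

lemma selfSimilar_closure {S : Set (TAut d)}
    (hS : ∀ g ∈ S, ∀ x : Fin d, sect g [x] ∈ Subgroup.closure S) :
    SelfSimilar (Subgroup.closure S) := by
  refine selfSimilar_of_sect_singleton_mem fun g hg => ?_
  induction hg using Subgroup.closure_induction with
  | mem g hg => exact hS g hg
  | one => intro x; rw [sect_one]; exact one_mem _
  | mul g h _ _ hg hh => intro x; rw [sect_mul, apply_singleton]; exact mul_mem (hg _) (hh x)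
  | inv g _ hg => intro x; rw [sect_inv, apply_singleton]; exact inv_mem (hg _)

lemma selfSimilar_automatonGroup (A : FiniteAutomaton d) : SelfSimilar (automatonGroup A) :=
  selfSimilar_closure <| by
    rintro _ ⟨q, rfl⟩ x
    rw [A.compat]
    exact Subgroup.subset_closure ⟨_, rfl⟩

lemma selfSimilar_gft (D : ℕ) (P : Subgroup (FAut d D)) : SelfSimilar (gft d D P) :=
  fun g hg v w => by
    rw [sect_sect]
    exact hg _

lemma proj_mem_of_mem_gft {D : ℕ} {P : Subgroup (FAut d D)} {g : TAut d} (hg : g ∈ gft d D P) :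
    proj d D g ∈ P := by
  simpa only [sect_nil] using hg []

lemma le_gft_of_selfSimilar {D : ℕ} {P : Subgroup (FAut d D)} {H : Subgroup (TAut d)}
    (hH : SelfSimilar H) (hHP : H.map (proj d D) ≤ P) : H ≤ gft d D P :=
  fun g hg v => hHP ⟨_, hH g hg v, rfl⟩

lemma proj_eq_proj_iff {n : ℕ} {g h : TAut d} : proj d n g = proj d n h ↔ g⁻¹ * h ∈ lst d n :=
  QuotientGroup.eq

lemma proj_eq_one_iff {n : ℕ} {g : TAut d} : proj d n g = 1 ↔ g ∈ lst d n :=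
  QuotientGroup.eq_one_iff g

lemma lst_antitone : Antitone (lst d) :=
  fun _ _ hmn _ hg v hv => hg v (hv.trans hmn)

lemma lst_zero : lst d 0 = ⊤ :=
  eq_top_iff.mpr fun g _ v hv => by
    rw [List.length_eq_zero_iff.mp (Nat.le_zero.mp hv)]
    exact List.length_eq_zero_iff.mp (length_apply g [])

lemma inv_mul_mem_lst_iff {n : ℕ} {g h : TAut d} :
    g⁻¹ * h ∈ lst d n ↔ ∀ v : Vertex d, v.length ≤ n →
      (h : Equiv.Perm (Vertex d)) v = (g : Equiv.Perm (Vertex d)) v := by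
  refine forall₂_congr fun v _ => ?_
  simp only [MulMemClass.coe_mul, InvMemClass.coe_inv, Equiv.Perm.mul_apply]
  exact Equiv.Perm.inv_eq_iff_eq

lemma mem_lst_add_iff {g : TAut d} {n k : ℕ} :
    g ∈ lst d (n + k) ↔ g ∈ lst d n ∧ ∀ u : Vertex d, u.length = n → sect g u ∈ lst d k := by
  constructor
  · intro hg
    refine ⟨lst_antitone (Nat.le_add_right n k) hg, fun u hu w hw => ?_⟩
    rw [sect_apply, hg (u ++ w) (by simp only [List.length_append]; omega), List.drop_left]
  · rintro ⟨hn, hk⟩ v hv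
    rcases le_or_gt v.length n with h | h
    · exact hn v h
    · rw [← List.take_append_drop n v] at hv ⊢
      have hu : (v.take n).length = n := List.length_take_of_le h.le
      rw [apply_append_eq, hn _ hu.le, hk _ hu _ (by simp only [List.length_append] at hv; omega)]

instance (n : ℕ) : Finite (FAut d n) := by
  have := (List.finite_length_le (Fin d) n).to_subtype
  let r (g : TAut d) (v : {v : Vertex d | v.length ≤ n}) : {v : Vertex d | v.length ≤ n} :=
    ⟨(g : Equiv.Perm (Vertex d)) v, (length_apply g v).trans_le v.2⟩
  refine Finite.of_injective (fun q : FAut d n => r q.out) fun q q' h => ?_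
  rw [← QuotientGroup.out_eq' q, ← QuotientGroup.out_eq' q']
  exact QuotientGroup.eq.mpr <| inv_mul_mem_lst_iff.mpr fun v hv =>
    congrArg Subtype.val (congrFun h ⟨v, hv⟩).symm

lemma pow_mem_lst_of_mem_gft {D : ℕ} (hD : 1 ≤ D) {P : Subgroup (FAut d D)} {e : ℕ}
    (he : ∀ x ∈ P, x ^ e = 1) {g : TAut d} (hg : g ∈ gft d D P) (n : ℕ) :
    g ^ (e ^ n) ∈ lst d n := by
  induction n with
  | zero => simp [lst_zero]
  | succ n ih =>
    rw [pow_succ, pow_mul]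
    refine mem_lst_add_iff.mpr ⟨pow_mem ih e, fun u hu => ?_⟩
    have hsect : proj d D (sect (g ^ e ^ n) u) ∈ P :=
      proj_mem_of_mem_gft (selfSimilar_gft D P _ (pow_mem hg _) u)
    rw [sect_pow (ih u hu.le)]
    exact lst_antitone hD (proj_eq_one_iff.mp (by rw [map_pow]; exact he _ hsect))

lemma isPGroup_map_proj_gft {p D : ℕ} [Fact p.Prime] (hD : 1 ≤ D) {P : Subgroup (FAut d D)}
    (hP : IsPGroup p P) (n : ℕ) : IsPGroup p ((gft d D P).map (proj d n)) := by
  obtain ⟨c, hc⟩ := hP.exists_card_eq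
  have he : ∀ x ∈ P, x ^ p ^ c = 1 := fun x hx => by
    have h := pow_card_eq_one' (x := (⟨x, hx⟩ : P))
    rw [hc] at h
    exact congrArg Subtype.val h
  rintro ⟨_, g, hg, rfl⟩
  refine ⟨c * n, Subtype.ext ?_⟩
  simpa only [SubgroupClass.coe_pow, ← map_pow, pow_mul, OneMemClass.coe_one] using
    proj_eq_one_iff.mpr (pow_mem_lst_of_mem_gft hD he hg n)

lemma exists_normal_le_isCyclic_quotient {Γ : Type*} [Group Γ] [Finite Γ] [Group.IsNilpotent Γ]
    {K : Subgroup Γ} (hK : K ≠ ⊤) :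
    ∃ (M : Subgroup Γ) (_ : M.Normal), K ≤ M ∧ M ≠ ⊤ ∧ IsCyclic (Γ ⧸ M) := by
  obtain ⟨M, hM, hKM⟩ := (eq_top_or_exists_le_coatom K).resolve_left hK
  have hMn := Subgroup.NormalizerCondition.normal_of_coatom M
    Group.normalizerCondition_of_isNilpotent hM
  obtain ⟨y, hy⟩ : ∃ y, y ∉ M := by
    by_contra! h
    exact hM.1 ((Subgroup.eq_top_iff' M).mpr h)
  have hlt : M < (Subgroup.zpowers (y : Γ ⧸ M)).comap (QuotientGroup.mk' M) :=
    SetLike.lt_iff_le_and_exists.mpr ⟨fun m hm => by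
      simp [(QuotientGroup.eq_one_iff m).mpr hm], y, Subgroup.mem_zpowers _, hy⟩
  refine ⟨M, hMn, hKM, hM.1, isCyclic_iff_exists_zpowers_eq_top.mpr ⟨y, ?_⟩⟩
  refine (Subgroup.eq_top_iff' _).mpr fun q => ?_
  obtain ⟨z, rfl⟩ := QuotientGroup.mk'_surjective M q
  have hz : z ∈ (Subgroup.zpowers (y : Γ ⧸ M)).comap (QuotientGroup.mk' M) := by
    rw [hM.2 _ hlt]
    exact Subgroup.mem_top z
  exact hz

lemma isOpen_lst (n : ℕ) : IsOpen (lst d n : Set (TAut d)) := by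
  have h : (lst d n : Set (TAut d)) =
      ⋂ v ∈ {v : Vertex d | v.length ≤ n}, {g : TAut d | (g : Equiv.Perm (Vertex d)) v = v} := by
    ext g
    simp only [SetLike.mem_coe, mem_lst, Set.mem_iInter, Set.mem_ofPred_eq]
  rw [h]
  exact (List.finite_length_le (Fin d) n).isOpen_biInter fun v _ => isOpen_eval d v v

lemma mem_closure_iff_forall_proj {S : Set (TAut d)} {g : TAut d} :
    g ∈ closure S ↔ ∀ n, ∃ a ∈ S, proj d n a = proj d n g := by
  constructor
  · intro hg n
    have hU : IsOpen ((fun h : TAut d => h⁻¹ * g) ⁻¹' (lst d n : Set (TAut d))) :=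
      (isOpen_lst n).preimage (continuous_inv.mul continuous_const)
    obtain ⟨a, ha, haS⟩ := mem_closure_iff.mp hg _ hU (by simp)
    exact ⟨a, haS, proj_eq_proj_iff.mpr ha⟩
  · intro h
    rw [mem_closure_iff]
    intro o ho hgo
    obtain ⟨W, hW, rfl⟩ := (@isOpen_induced_iff (TAut d) (Vertex d → Vertex d)
      (@Pi.topologicalSpace (Vertex d) (fun _ => Vertex d) (fun _ => ⊥)) o
      (fun g : TAut d => ((g : Equiv.Perm (Vertex d)) : Vertex d → Vertex d))).mp ho
    obtain ⟨I, u, hIu, hsub⟩ :=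
      (@isOpen_pi_iff (Vertex d) (fun _ => Vertex d) (fun _ => ⊥) W).mp hW _ hgo
    obtain ⟨a, haS, ha⟩ := h (I.sup List.length)
    refine ⟨a, hsub fun v hv => ?_, haS⟩
    rw [proj_eq_proj_iff, inv_mul_mem_lst_iff] at ha
    show (a : Equiv.Perm (Vertex d)) v ∈ u v
    rw [← ha v (Finset.le_sup hv)]
    exact (hIu v hv).2

lemma proj_sect_eq_of_proj_eq {g h : TAut d} {v : Vertex d} {n : ℕ}
    (hgh : proj d (v.length + n) g = proj d (v.length + n) h) :
    proj d n (sect g v) = proj d n (sect h v) := by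
  rw [proj_eq_proj_iff, inv_mul_mem_lst_iff] at hgh ⊢
  intro w hw
  rw [sect_apply, sect_apply, hgh (v ++ w) (by simp only [List.length_append]; omega)]

lemma isClosed_gft (D : ℕ) (P : Subgroup (FAut d D)) : IsClosed (gft d D P : Set (TAut d)) := by
  refine closure_subset_iff_isClosed.mp fun g hg v => ?_
  obtain ⟨h, hh, hhg⟩ := mem_closure_iff_forall_proj.mp hg (v.length + D)
  rw [← proj_sect_eq_of_proj_eq hhg]
  exact hh v

lemma closure_eq_of_map_proj_le {H K : Subgroup (TAut d)} (hK : IsClosed (K : Set (TAut d)))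
    (hHK : H ≤ K) (hKH : ∀ n, K.map (proj d n) ≤ H.map (proj d n)) :
    closure (H : Set (TAut d)) = K := by
  refine (closure_minimal hHK hK).antisymm fun g hg => mem_closure_iff_forall_proj.mpr fun n => ?_
  obtain ⟨a, ha, hag⟩ := hKH n ⟨g, hg, rfl⟩
  exact ⟨a, ha, hag⟩

lemma finite_setOf_isOpen_ker {Γ F : Type*} [Group Γ] [TopologicalSpace Γ] [IsTopologicalGroup Γ]
    [Group F] [Finite F] {S : Set Γ} (hS : S.Finite)
    (hdense : Dense (Subgroup.closure S : Set Γ)) :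
    {χ : Γ →* F | IsOpen (χ.ker : Set Γ)}.Finite := by
  have := hS.to_subtype
  refine Set.Finite.of_finite_image (f := fun χ (s : S) => χ s) (Set.toFinite _) ?_
  intro χ hχ χ' hχ' h
  have hopen : IsOpen (χ.eqLocus χ' : Set Γ) := by
    refine Subgroup.isOpen_mono (H₁ := χ.ker ⊓ χ'.ker) (fun γ hγ => ?_) (hχ.inter hχ')
    simp only [Subgroup.mem_inf, MonoidHom.mem_ker] at hγ
    show χ γ = χ' γ
    rw [hγ.1, hγ.2]
  have hS' : Set.EqOn χ χ' (Subgroup.closure S) :=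
    MonoidHom.eqOn_closure fun s hs => congrFun h ⟨s, hs⟩
  ext γ
  exact (Subgroup.isClosed_of_isOpen _ hopen).closure_subset_iff.mpr hS' (hdense γ)

lemma isOpen_ker_of_lst_subgroupOf_le {G : Subgroup (TAut d)} {F : Type*} [Group F]
    {χ : G →* F} {m : ℕ} (h : (lst d m).subgroupOf G ≤ χ.ker) : IsOpen (χ.ker : Set G) :=
  Subgroup.isOpen_mono h <| by
    rw [Subgroup.coe_subgroupOf]
    exact (isOpen_lst m).preimage continuous_subtype_val

lemma exists_lst_le_ker_of_finite {G : Subgroup (TAut d)} {F : Type*} [Group F]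
    {C : Set (G →* F)} (hC : C.Finite) (h : ∀ χ ∈ C, ∃ m, (lst d m).subgroupOf G ≤ χ.ker) :
    ∃ n, ∀ χ ∈ C, (lst d n).subgroupOf G ≤ χ.ker := by
  refine ((hC.eventually_all (l := Filter.atTop)).mpr fun χ hχ => ?_).exists
  obtain ⟨m, hm⟩ := h χ hχ
  exact Filter.eventually_atTop.mpr
    ⟨m, fun n hn => (Subgroup.subgroupOf_mono G (lst_antitone hn)).trans hm⟩

section SectionProduct

variable {F : Type*} [CommGroup F]

/-- Multiplicative because `γ` permutes the first level and `F` is commutative. -/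
noncomputable def sectProd {G : Subgroup (TAut d)} (hG : SelfSimilar G) (χ : G →* F) : G →* F where
  toFun γ := ∏ x : Fin d, χ ⟨sect γ [x], hG γ γ.2 [x]⟩
  map_one' := Fintype.prod_eq_one _ fun x => by
    rw [← map_one χ]
    exact congrArg χ (Subtype.ext (sect_one _))
  map_mul' γ δ := by
    rw [← Fintype.prod_bijective (letterMap δ) (letterMap_bijective (δ : TAut d))
      (fun x => χ ⟨sect γ [letterMap δ x], hG γ γ.2 _⟩) (fun x => χ ⟨sect γ [x], hG γ γ.2 _⟩)
      fun _ => rfl, ← Finset.prod_mul_distrib]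
    refine Fintype.prod_congr _ _ fun x => ?_
    rw [← map_mul]
    exact congrArg χ (Subtype.ext (by simp [sect_mul, apply_singleton]))

lemma sectProd_apply {G : Subgroup (TAut d)} (hG : SelfSimilar G) (χ : G →* F) (γ : G) :
    sectProd hG χ γ = ∏ x : Fin d, χ ⟨sect γ [x], hG γ γ.2 [x]⟩ :=
  rfl

lemma lst_subgroupOf_le_ker_sectProd {G : Subgroup (TAut d)} (hG : SelfSimilar G) {χ : G →* F}
    {m : ℕ} (h : (lst d m).subgroupOf G ≤ χ.ker) :
    (lst d (m + 1)).subgroupOf G ≤ (sectProd hG χ).ker := by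
  intro γ hγ
  rw [Subgroup.mem_subgroupOf, Nat.add_comm, mem_lst_add_iff] at hγ
  exact Fintype.prod_eq_one _ fun x => h (hγ.2 [x] rfl)

variable {D : ℕ} {P : Subgroup (FAut d D)}

lemma eq_one_of_lst_le_ker {H : Subgroup (TAut d)} (hHG : H ≤ gft d D P)
    (hHP : P ≤ H.map (proj d D)) {χ : gft d D P →* F} (hχH : H.subgroupOf (gft d D P) ≤ χ.ker)
    (hχD : (lst d D).subgroupOf (gft d D P) ≤ χ.ker) : χ = 1 := by
  ext γ
  obtain ⟨a, ha, haγ⟩ := hHP (proj_mem_of_mem_gft γ.2)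
  have h : χ (⟨a, hHG ha⟩⁻¹ * γ) = 1 := hχD (proj_eq_proj_iff.mp haγ)
  rwa [map_mul, map_inv, hχH ha, inv_one, one_mul] at h

lemma lst_le_ker_of_lst_succ_le_ker_sectProd [NeZero d] {n : ℕ} (hn : D ≤ n + 1)
    {χ : gft d D P →* F}
    (h : (lst d (n + 1)).subgroupOf (gft d D P) ≤ (sectProd (selfSimilar_gft D P) χ).ker) :
    (lst d n).subgroupOf (gft d D P) ≤ χ.ker := by
  rintro ⟨g, hg⟩ hgn
  rw [Subgroup.mem_subgroupOf] at hgn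
  let gs : Fin d → TAut d := fun x => if x = 0 then g else 1
  have hgs_lst : ∀ x, gs x ∈ lst d n := fun x => by
    by_cases hx : x = 0 <;> simp [gs, hx, hgn, one_mem]
  have hgs_gft : ∀ x, gs x ∈ gft d D P := fun x => by
    by_cases hx : x = 0 <;> simp [gs, hx, hg, one_mem]
  have hlst := ofSections_mem_lst hgs_lst
  have hgft : ofSections gs ∈ gft d D P := ofSections_mem_gft hgs_gft <| by
    rw [proj_eq_one_iff.mpr (lst_antitone hn hlst)]
    exact one_mem P
  have hprod := h (x := ⟨ofSections gs, hgft⟩) hlst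
  rw [MonoidHom.mem_ker, sectProd_apply, Fintype.prod_eq_single 0 fun x hx => ?_] at hprod
  · simpa [sect_ofSections, gs] using hprod
  · rw [← map_one χ]
    exact congrArg χ (Subtype.ext (by simp [sect_ofSections, gs, hx]))

lemma lst_le_ker_of_lst_add_le_ker_iterate [NeZero d] {χ : gft d D P →* F} {k : ℕ}
    (h : (lst d (D + k)).subgroupOf (gft d D P) ≤
      ((sectProd (selfSimilar_gft D P))^[k] χ).ker) :
    (lst d D).subgroupOf (gft d D P) ≤ χ.ker := by
  induction k with
  | zero => exact h
  | succ k ih =>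
    rw [Function.iterate_succ_apply'] at h
    exact ih (lst_le_ker_of_lst_succ_le_ker_sectProd (by omega) h)

theorem eq_one_of_le_ker [NeZero d] [Finite F] (htfg : TopFG (gft d D P))
    {H : Subgroup (TAut d)} (hHG : H ≤ gft d D P) (hHP : P ≤ H.map (proj d D))
    {χ : gft d D P →* F} (hχH : H.subgroupOf (gft d D P) ≤ χ.ker) {m : ℕ}
    (hχm : (lst d m).subgroupOf (gft d D P) ≤ χ.ker) : χ = 1 := by
  set Ψ := sectProd (F := F) (selfSimilar_gft D P)
  have hlevel : ∀ k, (lst d (m + k)).subgroupOf (gft d D P) ≤ (Ψ^[k] χ).ker := by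
    intro k
    induction k with
    | zero => exact hχm
    | succ k ih =>
      rw [Function.iterate_succ_apply']
      exact lst_subgroupOf_le_ker_sectProd _ ih
  obtain ⟨S, hS, hdense⟩ := htfg
  have horbit : (Set.range fun k => Ψ^[k] χ).Finite :=
    (finite_setOf_isOpen_ker hS hdense).subset <|
      Set.range_subset_iff.mpr fun k => isOpen_ker_of_lst_subgroupOf_le (hlevel k)
  obtain ⟨n, hn⟩ := exists_lst_le_ker_of_finite horbit <|
    Set.forall_mem_range.mpr fun k => ⟨m + k, hlevel k⟩
  refine eq_one_of_lst_le_ker hHG hHP hχH (lst_le_ker_of_lst_add_le_ker_iterate (k := n) ?_)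
  exact (Subgroup.subgroupOf_mono _ (lst_antitone (Nat.le_add_left n D))).trans (hn _ ⟨n, rfl⟩)

end SectionProduct

theorem map_proj_gft_le {p D : ℕ} (hp : p.Prime) (hD : 1 ≤ D) {P : Subgroup (FAut d D)}
    (hPp : IsPGroup p P) (htfg : TopFG (gft d D P)) {H : Subgroup (TAut d)}
    (hHG : H ≤ gft d D P) (hHP : P ≤ H.map (proj d D)) (n : ℕ) :
    (gft d D P).map (proj d n) ≤ H.map (proj d n) := by
  rcases Nat.eq_zero_or_pos d with rfl | hd
  · rintro _ ⟨g, -, rfl⟩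
    exact ⟨1, one_mem H, by rw [Subsingleton.elim g 1]⟩
  have : NeZero d := ⟨hd.ne'⟩
  have : Fact p.Prime := ⟨hp⟩
  have := (isPGroup_map_proj_gft hD hPp n).isNilpotent
  by_contra hle
  obtain ⟨M, _, hKM, hM, hcyc⟩ := exists_normal_le_isCyclic_quotient
    (K := (H.map (proj d n)).subgroupOf ((gft d D P).map (proj d n))) fun htop =>
      hle fun x hx => (Subgroup.subgroupOf_eq_top.mp htop) hx
  let _ := hcyc.commGroup
  let χ := (QuotientGroup.mk' M).comp ((proj d n).subgroupMap (gft d D P))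
  have hχ : χ = 1 := by
    refine eq_one_of_le_ker htfg hHG hHP (m := n) (fun a ha => ?_) fun γ hγ => ?_
    · exact (QuotientGroup.eq_one_iff _).mpr (hKM ⟨a, ha, rfl⟩)
    · rw [MonoidHom.mem_ker, MonoidHom.comp_apply]
      convert map_one (QuotientGroup.mk' M)
      exact Subtype.ext (proj_eq_one_iff.mpr hγ)
  refine hM ((Subgroup.eq_top_iff' M).mpr fun x => ?_)
  obtain ⟨γ, rfl⟩ := (proj d n).subgroupMap_surjective (gft d D P) x
  exact (QuotientGroup.eq_one_iff _).mp (DFunLike.congr_fun hχ γ)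

theorem statement_18_general (p d D : ℕ) (hp : p.Prime) (hD : 1 ≤ D)
    (P : Subgroup (FAut d D))
    (hPp : IsPGroup p ↥P) (htfg : TopFG (gft d D P))
    (A : FiniteAutomaton d)
    (hproj : (automatonGroup A).map (proj d D) = P) :
    closure ((automatonGroup A : Subgroup (TAut d)) : Set (TAut d))
      = ((gft d D P : Subgroup (TAut d)) : Set (TAut d)) := by
  have hle := le_gft_of_selfSimilar (selfSimilar_automatonGroup A) hproj.le
  exact closure_eq_of_map_proj_le (isClosed_gft D P) hle
    (map_proj_gft_le hp hD hPp htfg hle hproj.ge)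

/-- Let `p` be a prime and `P ≤ Aut(T^D)` a minimal pattern subgroup which
is a `p`-group, such that `G_P` is topologically finitely generated.  If `𝒜` is a finite
invertible automaton over the alphabet `{1,…,d}` with `π_D(G(𝒜)) = P`, then the closure of
`G(𝒜)` in `Aut(T)` equals `G_P`. -/
theorem statement_18 (p d D : ℕ) (hp : p.Prime) (hD : 1 ≤ D)
    (P : Subgroup (FAut d D)) (hmin : IsMinimalPattern d D P)
    (hPp : IsPGroup p ↥P) (htfg : TopFG (gft d D P))
    (A : FiniteAutomaton d)
    (hproj : (automatonGroup A).map (proj d D) = P) :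
    closure ((automatonGroup A : Subgroup (TAut d)) : Set (TAut d))
      = ((gft d D P : Subgroup (TAut d)) : Set (TAut d)) :=
  statement_18_general p d D hp hD P hPp htfg A hproj

end TreeFT
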